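/- For all n ≥ 3, |A_n| = (n−1) · ∏_{i=2}^{n−1} (n−i)^{f_{i−2}}, where f_k are the Fibonacci numbers with f_0 = 0, f_1 = 1. -/

import Mathlib

/-- Sets of inflated random Fibonacci words: A₁ = {0}, A₂ = {1},
    Aₙ = Aₙ₋₁Aₙ₋₂ ∪ Aₙ₋₂Aₙ₋₁ for n ≥ 3 (A₀ = ∅). -/
def wordSet : ℕ → Set (List Bool)
  | 0 => ∅
  | 1 => {[false]}
  | 2 => {[true]}
  | (n + 3) => Set.image2 (· ++ ·) (wordSet (n + 2)) (wordSet (n + 1)) ∪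
      Set.image2 (· ++ ·) (wordSet (n + 1)) (wordSet (n + 2))

/-- Concatenation of sets of words: UV = {uv : u ∈ U, v ∈ V}. -/
def cat (U V : Set (List Bool)) : Set (List Bool) := Set.image2 (· ++ ·) U V

/-- W[a,b]: the set of segments wₐ…w_b (1-based indexing) of words in W. -/
def seg (W : Set (List Bool)) (a b : ℕ) : Set (List Bool) :=
  (fun w => (w.drop (a - 1)).take (b - a + 1)) '' W

/-- F(S, m): the set of all contiguous factors of length m of words in S. -/
def factorSet (S : Set (List Bool)) (m : ℕ) : Set (List Bool) :=
  {x | x.length = m ∧ ∃ w ∈ S, x <:+: w}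

/-- Fₙ: the set of factors of length fₙ occurring in any inflated word. -/
def Fn (n : ℕ) : Set (List Bool) := ⋃ m ≥ 1, factorSet (wordSet m) (Nat.fib n)

/-!
Every word of `Aₖ` has length `fₖ`, so both products in `Aₙ = Aₙ₋₁Aₙ₋₂ ∪ Aₙ₋₂Aₙ₋₁` are
unambiguous, and a cancellation property of the sets `Aₖ` identifies their intersection with
`Aₙ₋₂Aₙ₋₃Aₙ₋₂`. Inclusion–exclusion gives `aₙ = 2 aₙ₋₁ aₙ₋₂ - aₙ₋₂² aₙ₋₃` for `aₙ = |Aₙ|`, and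
with the initial values this nonlinear recurrence is equivalent to the multiplicative one
`(n - 2) aₙ = (n - 1) aₙ₋₁ aₙ₋₂`, which the product formula visibly satisfies.
-/

open Finset

theorem List.exists_eq_append_of_append_eq_append {α : Type*} {a b c d : List α}
    (h : a ++ b = c ++ d) (hl : a.length ≤ c.length) : ∃ r, c = a ++ r ∧ b = r ++ d := by
  obtain ⟨r, rfl⟩ : a <+: c :=
    List.prefix_of_prefix_length_le (h ▸ List.prefix_append a b) (List.prefix_append c d) hl
  exact ⟨r, rfl, List.append_cancel_left (h.trans (List.append_assoc a r d))⟩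

theorem Set.ncard_image2_append {α : Type*} {U V : Set (List α)} {L : ℕ}
    (hU : ∀ u ∈ U, u.length = L) : (Set.image2 (· ++ ·) U V).ncard = U.ncard * V.ncard := by
  rw [← Set.image_uncurry_prod, Set.InjOn.ncard_image, Set.ncard_prod]
  rintro ⟨u₁, v₁⟩ ⟨hu₁, -⟩ ⟨u₂, v₂⟩ ⟨hu₂, -⟩ h
  obtain ⟨rfl, rfl⟩ := List.append_inj h (by rw [hU _ hu₁, hU _ hu₂])
  rfl

theorem wordSet_add_three (n : ℕ) :
    wordSet (n + 3) = cat (wordSet (n + 2)) (wordSet (n + 1)) ∪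
      cat (wordSet (n + 1)) (wordSet (n + 2)) := rfl

theorem length_of_mem_wordSet : ∀ {n : ℕ} {w : List Bool}, w ∈ wordSet n → w.length = Nat.fib n
  | 1, _, rfl | 2, _, rfl => rfl
  | n + 3, _, h => by
    have hfib : Nat.fib (n + 3) = Nat.fib (n + 1) + Nat.fib (n + 2) := Nat.fib_add_two
    rcases h with ⟨u, hu, v, hv, rfl⟩ | ⟨u, hu, v, hv, rfl⟩ <;>
      rw [List.length_append, length_of_mem_wordSet hu, length_of_mem_wordSet hv, hfib]
    exact add_comm _ _

theorem length_eq_length_of_mem_wordSet {k : ℕ} {u v : List Bool} (hu : u ∈ wordSet k)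
    (hv : v ∈ wordSet k) : u.length = v.length := by
  rw [length_of_mem_wordSet hu, length_of_mem_wordSet hv]

theorem length_le_length_of_mem_wordSet {i j : ℕ} {u v : List Bool} (hu : u ∈ wordSet i)
    (hv : v ∈ wordSet j) (hij : i ≤ j) : u.length ≤ v.length := by
  rw [length_of_mem_wordSet hu, length_of_mem_wordSet hv]
  exact Nat.fib_mono hij

theorem finite_wordSet : ∀ n : ℕ, (wordSet n).Finite
  | 0 => Set.finite_empty
  | 1 | 2 => Set.finite_singleton _
  | n + 3 => ((finite_wordSet (n + 2)).image2 _ (finite_wordSet (n + 1))).union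
      ((finite_wordSet (n + 1)).image2 _ (finite_wordSet (n + 2)))

theorem cat_wordSet_succ_wordSet_subset :
    ∀ k : ℕ, cat (wordSet (k + 1)) (wordSet k) ⊆ wordSet (k + 2)
  | 0 => by simp [cat, wordSet]
  | _ + 1 => Set.subset_union_left

theorem cat_wordSet_wordSet_succ_subset :
    ∀ k : ℕ, cat (wordSet k) (wordSet (k + 1)) ⊆ wordSet (k + 2)
  | 0 => by simp [cat, wordSet]
  | _ + 1 => Set.subset_union_right

theorem wordSet_cancel_left (k : ℕ) :
    (∀ w s, w ∈ wordSet (k + 1) → w ++ s ∈ wordSet (k + 2) → s ∈ wordSet k) ∧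
      (∀ w s, w ∈ wordSet k → w ++ s ∈ wordSet (k + 2) → s ∈ wordSet (k + 1)) := by
  induction k with
  | zero => exact ⟨fun w s hw hws => by simp_all [wordSet], fun w _ hw => hw.elim⟩
  | succ k ih =>
    obtain ⟨ih₁, ih₂⟩ := ih
    constructor
    · rintro w s hw (⟨p, hp, q, hq, h⟩ | ⟨q, hq, p, hp, h⟩)
      · obtain ⟨rfl, rfl⟩ := List.append_inj h (length_eq_length_of_mem_wordSet hp hw)
        exact hq
      · obtain ⟨r, rfl, rfl⟩ := List.exists_eq_append_of_append_eq_append h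
          (length_le_length_of_mem_wordSet hq hw (by omega))
        exact ih₂ r s (ih₁ q r hq hw) hp
    · rintro w s hw (⟨p, hp, q, hq, h⟩ | ⟨q, hq, p, hp, h⟩)
      · obtain ⟨r, rfl, rfl⟩ := List.exists_eq_append_of_append_eq_append h.symm
          (length_le_length_of_mem_wordSet hw hp (by omega))
        exact cat_wordSet_wordSet_succ_subset k ⟨r, ih₁ w r hw hp, q, hq, rfl⟩
      · obtain ⟨rfl, rfl⟩ := List.append_inj h (length_eq_length_of_mem_wordSet hq hw)
        exact hp

theorem cat_inter_cat_wordSet (k : ℕ) :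
    cat (wordSet (k + 2)) (wordSet (k + 1)) ∩ cat (wordSet (k + 1)) (wordSet (k + 2)) =
      cat (wordSet (k + 1)) (cat (wordSet k) (wordSet (k + 1))) := by
  ext w
  constructor
  · rintro ⟨⟨u, hu, v, hv, rfl⟩, ⟨v', hv', u', -, h⟩⟩
    obtain ⟨s, rfl, -⟩ := List.exists_eq_append_of_append_eq_append h
      (length_le_length_of_mem_wordSet hv' hu (by omega))
    exact ⟨v', hv', s ++ v, ⟨s, (wordSet_cancel_left k).1 v' s hv' hu, v, hv, rfl⟩,
      (List.append_assoc _ _ _).symm⟩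
  · rintro ⟨p, hp, _, ⟨q, hq, r, hr, rfl⟩, rfl⟩
    exact ⟨⟨p ++ q, cat_wordSet_succ_wordSet_subset k ⟨p, hp, q, hq, rfl⟩, r, hr,
        List.append_assoc _ _ _⟩,
      ⟨p, hp, q ++ r, cat_wordSet_wordSet_succ_subset k ⟨q, hq, r, hr, rfl⟩, rfl⟩⟩

theorem ncard_cat_wordSet (k : ℕ) (V : Set (List Bool)) :
    (cat (wordSet k) V).ncard = (wordSet k).ncard * V.ncard :=
  Set.ncard_image2_append fun _ => length_of_mem_wordSet

theorem ncard_wordSet_add_three_add_sq_mul (k : ℕ) :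
    (wordSet (k + 3)).ncard + (wordSet (k + 1)).ncard ^ 2 * (wordSet k).ncard =
      2 * (wordSet (k + 2)).ncard * (wordSet (k + 1)).ncard := by
  have h := Set.ncard_union_add_ncard_inter
    (cat (wordSet (k + 2)) (wordSet (k + 1))) (cat (wordSet (k + 1)) (wordSet (k + 2)))
    ((finite_wordSet (k + 2)).image2 _ (finite_wordSet (k + 1)))
    ((finite_wordSet (k + 1)).image2 _ (finite_wordSet (k + 2)))
  rw [← wordSet_add_three, cat_inter_cat_wordSet, ncard_cat_wordSet, ncard_cat_wordSet,
    ncard_cat_wordSet, ncard_cat_wordSet] at h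
  linear_combination h

theorem mul_ncard_wordSet_add_three (k : ℕ) :
    (k + 1) * (wordSet (k + 3)).ncard =
      (k + 2) * (wordSet (k + 2)).ncard * (wordSet (k + 1)).ncard := by
  induction k with
  | zero => simp [wordSet]
  | succ k ih =>
    have h : (wordSet (k + 4)).ncard + (wordSet (k + 2)).ncard ^ 2 * (wordSet (k + 1)).ncard =
        2 * (wordSet (k + 3)).ncard * (wordSet (k + 2)).ncard :=
      ncard_wordSet_add_three_add_sq_mul (k + 1)
    zify at h ih ⊢
    linear_combination (k + 2 : ℤ) * h + (wordSet (k + 2)).ncard * ih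

def fibPowProd (m : ℕ) : ℕ := ∏ j ∈ range (m + 1), (m + 1 - j) ^ Nat.fib j

theorem fibPowProd_zero : fibPowProd 0 = 1 := by simp [fibPowProd]

theorem fibPowProd_one : fibPowProd 1 = 1 := by simp [fibPowProd, prod_range_succ]

theorem fibPowProd_add_two (m : ℕ) :
    fibPowProd (m + 2) = (m + 2) * fibPowProd (m + 1) * fibPowProd m := by
  have hsplit : ∀ j ∈ range (m + 1), (m + 3 - (j + 1 + 1)) ^ Nat.fib (j + 1 + 1) =
      (m + 2 - (j + 1)) ^ Nat.fib (j + 1) * (m + 1 - j) ^ Nat.fib j := by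
    intro j hj
    rw [show m + 3 - (j + 1 + 1) = m + 1 - j by omega, show m + 2 - (j + 1) = m + 1 - j by omega,
      Nat.fib_add_two, pow_add, mul_comm]
  rw [fibPowProd, fibPowProd, fibPowProd, prod_range_succ' _ (m + 2), prod_range_succ' _ (m + 1),
    prod_congr rfl hsplit, prod_mul_distrib, prod_range_succ' _ (m + 1)]
  simp only [Nat.reduceSubDiff, zero_add, add_tsub_cancel_right, Nat.fib_one, pow_one, tsub_zero,
    Nat.fib_zero, pow_zero, mul_one]
  ring

theorem prod_Icc_eq_fibPowProd (m : ℕ) :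
    ∏ i ∈ Icc 2 (m + 2), (m + 3 - i) ^ Nat.fib (i - 2) = fibPowProd m := by
  rw [← Ico_add_one_right_eq_Icc, prod_Ico_eq_prod_range, fibPowProd]
  refine prod_congr (by simp) fun j _ => ?_
  rw [show m + 3 - (2 + j) = m + 1 - j by omega, Nat.add_sub_cancel_left]

theorem ncard_wordSet_three : (wordSet 3).ncard = 2 := by simp [wordSet]

theorem ncard_wordSet_add_three (m : ℕ) : (wordSet (m + 3)).ncard = (m + 2) * fibPowProd m := by
  induction m using Nat.twoStepInduction with
  | zero => rw [ncard_wordSet_three, fibPowProd_zero]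
  | one =>
    have h : 2 * (wordSet 4).ncard = 3 * (wordSet 3).ncard * (wordSet 2).ncard :=
      mul_ncard_wordSet_add_three 1
    rw [ncard_wordSet_three, show (wordSet 2).ncard = 1 from Set.ncard_singleton _] at h
    change (wordSet 4).ncard = 3 * fibPowProd 1
    rw [fibPowProd_one]
    omega
  | more m ih₀ ih₁ =>
    apply Nat.eq_of_mul_eq_mul_left (show 0 < m + 3 by omega)
    calc (m + 3) * (wordSet (m + 5)).ncard
        = (m + 4) * (wordSet (m + 4)).ncard * (wordSet (m + 3)).ncard :=
          mul_ncard_wordSet_add_three (m + 2)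
      _ = (m + 4) * ((m + 3) * fibPowProd (m + 1)) * ((m + 2) * fibPowProd m) := by
          rw [ih₀, ih₁]
      _ = (m + 3) * ((m + 2 + 2) * fibPowProd (m + 2)) := by
          rw [fibPowProd_add_two]; ring

theorem stmt6 (n : ℕ) (hn : 3 ≤ n) :
    (wordSet n).ncard =
      (n - 1) * ∏ i ∈ Finset.Icc 2 (n - 1), (n - i) ^ Nat.fib (i - 2) := by
  obtain ⟨m, rfl⟩ := Nat.exists_eq_add_of_le' hn
  rw [show m + 3 - 1 = m + 2 by omega, prod_Icc_eq_fibPowProd, ncard_wordSet_add_three]
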